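/- Let (a_j)_{j≥0} ⊂ (0,∞) be increasing with a_j − a_{j−1} → ∞, and suppose the Littlewood–Paley square function S^{𝓘_a} associated to the partition 𝓘_a := {(−a_0,a_0)} ∪ {±[a_{j−1}, a_j)}_{j≥1} is bounded on L^{p'}(ℝ) for some p > 2 with 1/p + 1/p' = 1. Then there is a constant C_p > 0 such that a_k^{2/p'} ≤ C_p Σ_{j=1}^{k} (a_j − a_{j−1})^{2/p'} for all k ≥ 1 (with a_0 counted as a_0 − 0). -/

import Mathlib

/-!
Test the bound on `f(x) = a_k e^{-π a_k² x²}`, whose Fourier transform `e^{-π (ξ / a_k)²}` is at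
least `e^{-π}` on `[-a_k, a_k]`, against the Gaussians `g_I` adapted to the blocks
`I = (-a₀, a₀)` and `I = [a_j, a_{j+1})`, `j < k`: the inverse Fourier transform of `g_I` is
`e^{-π ((ξ - m_I) / w_I)²}`, where `m_I` and `w_I` are the midpoint and half-length of `I`, so it is
also at least `e^{-π}` on `I`. By Fubini, `∫ g_I S_I f = ∫_I f̂ ǧ_I ≥ e^{-2π} |I|`, and the lengths
`|I|` add up to `a_k + a₀`. Cauchy–Schwarz in `I` and Hölder in `x` give
`e^{-2π} a_k ≤ ‖(∑ |g_I|²)^{1/2}‖_p ‖S^{𝓘_a} f‖_{p'}`. Minkowski in `L^{p/2}` bounds the first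
factor by `(∑ ‖g_I‖_p²)^{1/2} ≤ (∑ w_I^{2/p'})^{1/2}`, the hypothesis bounds the second by
`C ‖f‖_{p'} ≤ C a_k^{1/p}`, and as `1 - 1/p = 1/p'`, squaring gives
`a_k^{2/p'} ≤ e^{4π} C² ∑ w_I^{2/p'}`.
-/

open MeasureTheory Filter

/-- The partial Fourier integral operator `S_{[c,d]} f(x) = ∫_c^d f̂(ξ) e^{2πiξx} dξ`. -/
noncomputable def SIf (f : ℝ → ℂ) (c d x : ℝ) : ℂ :=
  ∫ ξ in c..d, FourierTransform.fourier f ξ * Complex.exp (2 * Real.pi * Complex.I * ξ * x)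

/-- The Littlewood–Paley square function associated to the partition
`𝓘_a = {(-a₀,a₀)} ∪ {±[a_{j-1}, a_j)}_{j≥1}` of `ℝ`. -/
noncomputable def sqFn (a : ℕ → ℝ) (f : ℝ → ℂ) (x : ℝ) : ℝ :=
  Real.sqrt (‖SIf f (-(a 0)) (a 0) x‖ ^ 2 +
    ∑' j : ℕ, (‖SIf f (a j) (a (j + 1)) x‖ ^ 2 + ‖SIf f (-(a (j + 1))) (-(a j)) x‖ ^ 2))

open Real Complex FourierTransform
open scoped Nat SchwartzMap

noncomputable section

theorem abs_pow_mul_exp_neg_mul_sq_le {b : ℝ} (hb : 0 < b) (m : ℕ) (x : ℝ) :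
    |x| ^ m * rexp (-b * x ^ 2) ≤ 1 + m ! / b ^ m := by
  have hfac : (0 : ℝ) < m ! := by exact_mod_cast m.factorial_pos
  have hexp : rexp (-b * x ^ 2) ≤ 1 := exp_le_one_iff.mpr (by nlinarith [sq_nonneg x])
  have hpow : |x| ^ m ≤ 1 + (x ^ 2) ^ m := by
    rcases le_total |x| 1 with hx | hx
    · linarith [pow_le_one₀ (n := m) (abs_nonneg x) hx, pow_nonneg (sq_nonneg x) m]
    · rw [← sq_abs, ← pow_mul]
      linarith [pow_le_pow_right₀ hx (by omega : m ≤ 2 * m)]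
  have htail : (x ^ 2) ^ m * rexp (-b * x ^ 2) ≤ m ! / b ^ m := by
    have h := pow_div_factorial_le_exp (b * x ^ 2) (by positivity) m
    rw [div_le_iff₀ hfac, mul_pow] at h
    rw [le_div_iff₀ (by positivity), neg_mul, Real.exp_neg]
    calc (x ^ 2) ^ m * (rexp (b * x ^ 2))⁻¹ * b ^ m
        = b ^ m * (x ^ 2) ^ m * (rexp (b * x ^ 2))⁻¹ := by ring
      _ ≤ rexp (b * x ^ 2) * m ! * (rexp (b * x ^ 2))⁻¹ := by gcongr
      _ = m ! := by field_simp
  calc |x| ^ m * rexp (-b * x ^ 2) ≤ (1 + (x ^ 2) ^ m) * rexp (-b * x ^ 2) := by gcongr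
    _ = rexp (-b * x ^ 2) + (x ^ 2) ^ m * rexp (-b * x ^ 2) := by ring
    _ ≤ 1 + m ! / b ^ m := add_le_add hexp htail

open Polynomial in
theorem exists_iteratedDeriv_cexp_neg_mul_sq_eq (b : ℝ) (n : ℕ) :
    ∃ P : ℂ[X], ∀ x : ℝ,
      iteratedDeriv n (fun y : ℝ => cexp (-b * y ^ 2)) x = P.eval (x : ℂ) * cexp (-b * x ^ 2) := by
  induction n with
  | zero => exact ⟨1, by simp⟩
  | succ n ih =>
    obtain ⟨P, hP⟩ := ih
    refine ⟨derivative P + C (-2 * b : ℂ) * (X * P), fun x => ?_⟩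
    have hquad : HasDerivAt (fun z : ℂ => -b * z ^ 2) (-b * (2 * x)) x := by
      simpa [mul_comm] using (hasDerivAt_pow 2 (x : ℂ)).const_mul (-(b : ℂ))
    have hz : HasDerivAt (fun z : ℂ => P.eval z * cexp (-b * z ^ 2)) _ x :=
      (P.hasDerivAt (x : ℂ)).mul hquad.cexp
    rw [iteratedDeriv_succ, funext hP, hz.comp_ofReal.deriv]
    simp only [eval_add, eval_mul, eval_C, eval_X]
    ring

open Polynomial in
def gaussianSchwartz (b : ℝ) (hb : 0 < b) : 𝓢(ℝ, ℂ) where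
  toFun x := cexp (-b * x ^ 2)
  smooth' := (contDiff_const.mul (ofRealCLM.contDiff.pow 2)).cexp
  decay' k n := by
    obtain ⟨P, hP⟩ := exists_iteratedDeriv_cexp_neg_mul_sq_eq b n
    refine ⟨∑ i ∈ Finset.range (P.natDegree + 1), ‖P.coeff i‖ * (1 + (k + i)! / b ^ (k + i)),
      fun x => ?_⟩
    have hP_le :
        ‖P.eval (x : ℂ)‖ ≤ ∑ i ∈ Finset.range (P.natDegree + 1), ‖P.coeff i‖ * |x| ^ i := by
      rw [eval_eq_sum_range]
      refine (norm_sum_le _ _).trans (Finset.sum_le_sum fun i _ => ?_)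
      rw [norm_mul, norm_pow, norm_real, Real.norm_eq_abs]
    rw [norm_iteratedFDeriv_eq_norm_iteratedDeriv, hP x, norm_mul, norm_cexp_neg_mul_sq,
      ofReal_re, Real.norm_eq_abs]
    calc |x| ^ k * (‖P.eval (x : ℂ)‖ * rexp (-b * x ^ 2))
        ≤ |x| ^ k * ((∑ i ∈ Finset.range (P.natDegree + 1), ‖P.coeff i‖ * |x| ^ i)
            * rexp (-b * x ^ 2)) := by gcongr
      _ = ∑ i ∈ Finset.range (P.natDegree + 1),
            ‖P.coeff i‖ * (|x| ^ (k + i) * rexp (-b * x ^ 2)) := by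
        rw [Finset.sum_mul, Finset.mul_sum]
        exact Finset.sum_congr rfl fun i _ => by ring
      _ ≤ _ := by gcongr with i; exact abs_pow_mul_exp_neg_mul_sq_le hb _ x

theorem gaussianSchwartz_apply (b : ℝ) (hb : 0 < b) (x : ℝ) :
    gaussianSchwartz b hb x = cexp (-b * x ^ 2) := rfl

def gaussBump (c w : ℝ) (x : ℝ) : ℂ := w * cexp (-π * w ^ 2 * x ^ 2 + 2 * π * (I * c) * x)

theorem norm_gaussBump (c : ℝ) {w : ℝ} (hw : 0 < w) (x : ℝ) :
    ‖gaussBump c w x‖ = w * rexp (-(π * w ^ 2) * x ^ 2) := by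
  rw [gaussBump, norm_mul, norm_real, Real.norm_of_nonneg hw.le, Complex.norm_exp]
  congr 2
  simp only [add_re, mul_re, mul_im, I_re, I_im, ← ofReal_pow, ofReal_re, ofReal_im, neg_re,
    neg_im, re_ofNat, im_ofNat]
  ring

theorem continuous_gaussBump (c w : ℝ) : Continuous (gaussBump c w) := by
  unfold gaussBump; fun_prop

theorem integrable_gaussBump (c : ℝ) {w : ℝ} (hw : 0 < w) : Integrable (gaussBump c w) := by
  refine ((integrable_exp_neg_mul_sq (by positivity : 0 < π * w ^ 2)).const_mul w).mono'
    (continuous_gaussBump c w).aestronglyMeasurable (.of_forall fun x => ?_)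
  rw [norm_gaussBump c hw]

theorem fourier_gaussBump (c : ℝ) {w : ℝ} (hw : 0 < w) (ξ : ℝ) :
    𝓕 (gaussBump c w) ξ = rexp (-π * ((ξ - c) / w) ^ 2) := by
  have hb : 0 < ((w : ℂ) ^ 2).re := by rw [← ofReal_pow, ofReal_re]; positivity
  have hgauss := congrFun (fourier_gaussian_pi' hb (I * c)) ξ
  simp only [Real.fourier_real_eq_integral_exp_smul, smul_eq_mul] at hgauss ⊢
  simp only [gaussBump, mul_left_comm _ (w : ℂ), integral_const_mul, hgauss]
  have hsqrt : ((w : ℂ) ^ 2) ^ (1 / 2 : ℂ) = w := by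
    rw [← ofReal_pow, ← ofReal_one, ← ofReal_ofNat, ← ofReal_div, ← ofReal_cpow (by positivity),
      ← Real.sqrt_eq_rpow, Real.sqrt_sq hw.le]
  have hw' : (w : ℂ) ≠ 0 := ofReal_ne_zero.mpr hw.ne'
  rw [hsqrt, ← mul_assoc I I, I_mul_I, ofReal_exp]
  field_simp
  congr 1
  push_cast
  ring

theorem fourierInv_gaussBump (c : ℝ) {w : ℝ} (hw : 0 < w) (ξ : ℝ) :
    𝓕⁻ (gaussBump c w) ξ = rexp (-π * ((ξ + c) / w) ^ 2) := by
  rw [fourierInv_eq_fourier_neg, fourier_gaussBump c hw]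
  congr 3
  ring

theorem continuous_fourier_gaussBump (c : ℝ) {w : ℝ} (hw : 0 < w) :
    Continuous (𝓕 (gaussBump c w)) := by
  rw [funext (fourier_gaussBump c hw)]; fun_prop

theorem integrable_fourier_gaussBump (c : ℝ) {w : ℝ} (hw : 0 < w) :
    Integrable (𝓕 (gaussBump c w)) := by
  rw [funext (fourier_gaussBump c hw)]
  refine ((integrable_exp_neg_mul_sq (by positivity : 0 < π / w ^ 2)).comp_sub_right c).ofReal.congr
    (.of_forall fun ξ => ?_)
  simp only
  congr 2
  ring

theorem eLpNorm_gaussBump_le (c : ℝ) {w : ℝ} (hw : 0 < w) {q : ℝ} (hq : 1 ≤ q) :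
    eLpNorm (gaussBump c w) (ENNReal.ofReal q) ≤ ENNReal.ofReal (w ^ (1 - q⁻¹)) := by
  have hq0 : 0 < q := by linarith
  have hpow : ∀ x : ℝ, ‖gaussBump c w x‖ₑ ^ q
      = ENNReal.ofReal (w ^ q * rexp (-(q * (π * w ^ 2)) * x ^ 2)) := fun x => by
    rw [← ofReal_norm, norm_gaussBump c hw, ENNReal.ofReal_rpow_of_nonneg (by positivity) hq0.le,
      Real.mul_rpow hw.le (exp_pos _).le, ← Real.exp_mul]
    ring_nf
  have hint : ∫ x : ℝ, w ^ q * rexp (-(q * (π * w ^ 2)) * x ^ 2) ≤ w ^ (q - 1) := by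
    rw [integral_const_mul, integral_gaussian, Real.rpow_sub_one hw.ne',
      show π / (q * (π * w ^ 2)) = (√q * w)⁻¹ ^ 2 by field_simp; rw [sq_sqrt hq0.le],
      Real.sqrt_sq (by positivity), div_eq_mul_inv]
    gcongr
    exact le_mul_of_one_le_left hw.le (Real.one_le_sqrt.mpr hq)
  rw [eLpNorm_eq_lintegral_rpow_enorm_toReal (by simpa using hq0) ENNReal.ofReal_ne_top,
    ENNReal.toReal_ofReal hq0.le, lintegral_congr hpow,
    ← ofReal_integral_eq_lintegral_ofReal
      ((integrable_exp_neg_mul_sq (by positivity)).const_mul _) (.of_forall fun x => by positivity),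
    ENNReal.ofReal_rpow_of_nonneg (integral_nonneg fun x => by positivity) (by positivity)]
  refine ENNReal.ofReal_le_ofReal ((Real.rpow_le_rpow (integral_nonneg fun x => by positivity)
    hint (by positivity)).trans_eq ?_)
  rw [← Real.rpow_mul hw.le]
  congr 1
  field_simp

theorem exists_schwartzMap_eq_gaussBump {w : ℝ} (hw : 0 < w) :
    ∃ f : 𝓢(ℝ, ℂ), ⇑f = gaussBump 0 w :=
  ⟨(w : ℂ) • gaussianSchwartz (π * w ^ 2) (by positivity), funext fun x => by
    simp only [smul_apply, smul_eq_mul, gaussianSchwartz_apply, gaussBump, ofReal_zero,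
      mul_zero, zero_mul, add_zero]
    congr 2
    push_cast
    ring⟩

theorem norm_cexp_two_pi_I_mul (ξ x : ℝ) : ‖cexp (2 * π * I * ξ * x)‖ = 1 := by
  rw [show (2 * π * I * ξ * x : ℂ) = ↑(2 * π * ξ * x) * I by push_cast; ring, norm_exp_ofReal_mul_I]

theorem norm_SIf_le (F : ℝ → ℂ) {l r : ℝ} (hlr : l ≤ r) (x : ℝ) :
    ‖SIf F l r x‖ ≤ ∫ ξ in l..r, ‖𝓕 F ξ‖ :=
  (intervalIntegral.norm_integral_le_integral_norm hlr).trans_eq <| by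
    simp only [norm_mul, norm_cexp_two_pi_I_mul, mul_one]

theorem continuous_SIf {F : ℝ → ℂ} (hF : Continuous (𝓕 F)) (l r : ℝ) : Continuous (SIf F l r) :=
  intervalIntegral.continuous_parametric_intervalIntegral_of_continuous' (by fun_prop) l r

theorem summable_intervalIntegral_adjacent {g : ℝ → ℝ} (hg : Integrable g) (hg0 : 0 ≤ g)
    {a : ℕ → ℝ} (ha : Monotone a) : Summable fun j => ∫ ξ in a j..a (j + 1), g ξ := by
  refine summable_of_sum_range_le (c := ∫ ξ, g ξ)
    (fun j => intervalIntegral.integral_nonneg (ha j.le_succ) fun ξ _ => hg0 ξ) fun n => ?_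
  rw [intervalIntegral.sum_integral_adjacent_intervals fun j _ => hg.intervalIntegrable,
    intervalIntegral.integral_of_le (ha n.zero_le)]
  exact setIntegral_le_integral hg (.of_forall hg0)

theorem summable_sq_norm_SIf {F : ℝ → ℂ} (hF : Integrable (𝓕 F)) {a : ℕ → ℝ} (ha : Monotone a)
    (x : ℝ) :
    Summable fun j => ‖SIf F (a j) (a (j + 1)) x‖ ^ 2 + ‖SIf F (-(a (j + 1))) (-(a j)) x‖ ^ 2 := by
  set T := ∫ ξ, ‖𝓕 F ξ‖
  have hsq (l r : ℝ) (hlr : l ≤ r) : ‖SIf F l r x‖ ^ 2 ≤ T * ∫ ξ in l..r, ‖𝓕 F ξ‖ := by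
    have hS := norm_SIf_le F hlr x
    have hT : ∫ ξ in l..r, ‖𝓕 F ξ‖ ≤ T := by
      rw [intervalIntegral.integral_of_le hlr]
      exact setIntegral_le_integral hF.norm (.of_forall fun _ => norm_nonneg _)
    rw [sq]
    exact mul_le_mul (hS.trans hT) hS (norm_nonneg _) ((norm_nonneg _).trans (hS.trans hT))
  have hpos := summable_intervalIntegral_adjacent hF.norm (fun _ => norm_nonneg _) ha
  have hneg : Summable fun j => ∫ ξ in -a (j + 1)..-a j, ‖𝓕 F ξ‖ := by
    refine (summable_intervalIntegral_adjacent hF.norm.comp_neg (fun _ => norm_nonneg _) ha).congr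
      fun j => ?_
    exact intervalIntegral.integral_comp_neg fun ξ => ‖𝓕 F ξ‖
  refine ((hpos.add hneg).mul_left T).of_nonneg_of_le (fun j => by positivity) fun j => ?_
  rw [mul_add]
  exact add_le_add (hsq _ _ (ha j.le_succ)) (hsq _ _ (neg_le_neg (ha j.le_succ)))

theorem integral_mul_SIf {g F : ℝ → ℂ} (hg : Integrable g) (hF : Continuous (𝓕 F)) {l r : ℝ}
    (hlr : l ≤ r) : ∫ x, g x * SIf F l r x = ∫ ξ in l..r, 𝓕 F ξ * 𝓕⁻ g ξ := by
  have hint : Integrable (Function.uncurry fun x ξ => g x * (𝓕 F ξ * cexp (2 * π * I * ξ * x)))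
      (volume.prod (volume.restrict (Set.Ioc l r))) := by
    have hmeas : AEStronglyMeasurable
        (fun z : ℝ × ℝ => g z.1 * (𝓕 F z.2 * cexp (2 * π * I * z.2 * z.1)))
        (volume.prod (volume.restrict (Set.Ioc l r))) :=
      hg.aestronglyMeasurable.comp_fst.mul (by fun_prop : Continuous fun z : ℝ × ℝ =>
        𝓕 F z.2 * cexp (2 * π * I * z.2 * z.1)).aestronglyMeasurable
    refine (hg.norm.mul_prod hF.norm.integrableOn_Ioc).mono' hmeas (.of_forall fun z => ?_)
    simp only [Function.uncurry, norm_mul, norm_cexp_two_pi_I_mul, mul_one, le_refl]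
  simp only [SIf, intervalIntegral.integral_of_le hlr, ← integral_const_mul]
  rw [integral_integral_swap hint]
  refine setIntegral_congr_fun measurableSet_Ioc fun ξ _ => ?_
  rw [fourierInv_eq', ← integral_const_mul]
  congr 1 with x
  simp only [RCLike.inner_apply, conj_trivial, smul_eq_mul]
  push_cast
  ring_nf

def intervalBump (l r : ℝ) : ℝ → ℂ := gaussBump (-((l + r) / 2)) ((r - l) / 2)

theorem le_norm_integral_intervalBump_mul_SIf {F : ℝ → ℂ} (hF : Continuous (𝓕 F)) {l r δ : ℝ}
    (hlr : l < r) (hδ : 0 ≤ δ) (hFδ : ∀ ξ ∈ Set.Icc l r, δ ≤ (𝓕 F ξ).re) :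
    rexp (-π) * δ * (r - l) ≤ ‖∫ x, intervalBump l r x * SIf F l r x‖ := by
  have hw : 0 < (r - l) / 2 := by linarith
  have hinv := fourierInv_gaussBump (-((l + r) / 2)) hw
  have hcont : Continuous fun ξ => 𝓕 F ξ * 𝓕⁻ (intervalBump l r) ξ := by
    simp only [intervalBump, hinv]; fun_prop
  rw [intervalBump, integral_mul_SIf (integrable_gaussBump _ hw) hF hlr.le, ← intervalBump]
  refine le_trans ?_ (re_le_norm _)
  rw [← RCLike.re_to_complex, ← intervalIntegral.intervalIntegral_re (hcont.intervalIntegrable l r)]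
  calc rexp (-π) * δ * (r - l) = ∫ _ in l..r, rexp (-π) * δ := by
        rw [intervalIntegral.integral_const, smul_eq_mul]; ring
    _ ≤ ∫ ξ in l..r, RCLike.re (𝓕 F ξ * 𝓕⁻ (intervalBump l r) ξ) := by
      refine intervalIntegral.integral_mono_on hlr.le intervalIntegrable_const
        ((continuous_re.comp hcont).intervalIntegrable l r) fun ξ hξ => ?_
      have hsq : ((ξ + -((l + r) / 2)) / ((r - l) / 2)) ^ 2 ≤ 1 := by
        rw [div_pow, div_le_one (by positivity)]
        nlinarith [hξ.1, hξ.2]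
      have hexp : rexp (-π) ≤ rexp (-π * ((ξ + -((l + r) / 2)) / ((r - l) / 2)) ^ 2) :=
        exp_le_exp.mpr (by nlinarith [pi_pos])
      rw [intervalBump, hinv, RCLike.re_to_complex, re_mul_ofReal, mul_comm (rexp _)]
      exact mul_le_mul (hFδ ξ hξ) hexp (exp_pos _).le (hδ.trans (hFδ ξ hξ))

section SquareFunction

variable {α E ι : Type*} [MeasurableSpace α] {μ : Measure α} [NormedAddCommGroup E]

theorem aestronglyMeasurable_sqrt_sum_sq_norm (s : Finset ι) {g : ι → α → E}
    (hg : ∀ i ∈ s, AEStronglyMeasurable (g i) μ) :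
    AEStronglyMeasurable (fun x => √(∑ i ∈ s, ‖g i x‖ ^ 2)) μ :=
  continuous_sqrt.comp_aestronglyMeasurable
    (Finset.aestronglyMeasurable_fun_sum s fun i hi => (hg i hi).norm.pow 2)

/-- Minkowski's inequality in `L^{p/2}`, applied to the squares `‖g i‖²`. -/
theorem eLpNorm_sqrt_sum_sq_norm_le (s : Finset ι) {g : ι → α → E}
    (hg : ∀ i ∈ s, AEStronglyMeasurable (g i) μ) {p : ℝ} (hp : 2 ≤ p) :
    eLpNorm (fun x => √(∑ i ∈ s, ‖g i x‖ ^ 2)) (ENNReal.ofReal p) μ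
      ≤ (∑ i ∈ s, eLpNorm (g i) (ENNReal.ofReal p) μ ^ 2) ^ (2⁻¹ : ℝ) := by
  have hp2 : ENNReal.ofReal p = ENNReal.ofReal (p / 2) * ENNReal.ofReal 2 := by
    rw [← ENNReal.ofReal_mul (by linarith)]; ring_nf
  have hsq : ∀ i, eLpNorm (fun x => ‖g i x‖ ^ (2 : ℝ)) (ENNReal.ofReal (p / 2)) μ
      = eLpNorm (g i) (ENNReal.ofReal p) μ ^ 2 := fun i => by
    rw [eLpNorm_norm_rpow _ two_pos, ← hp2, ENNReal.rpow_two]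
  have hsqrt : (fun x => √(∑ i ∈ s, ‖g i x‖ ^ 2))
      = fun x => ‖∑ i ∈ s, ‖g i x‖ ^ (2 : ℝ)‖ ^ (2⁻¹ : ℝ) := funext fun x => by
    simp only [Real.rpow_two, Real.norm_of_nonneg (Finset.sum_nonneg fun i _ => sq_nonneg ‖g i x‖),
      Real.sqrt_eq_rpow, one_div]
  rw [hsqrt, eLpNorm_norm_rpow _ (by norm_num), ← ENNReal.ofReal_mul (by linarith),
    show p * 2⁻¹ = p / 2 by ring]
  refine ENNReal.rpow_le_rpow ?_ (by norm_num)
  rw [← Finset.sum_fn]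
  refine (eLpNorm_sum_le (fun i hi => ?_) ?_).trans_eq ?_
  · exact ((hg i hi).norm.aemeasurable.pow_const _).aestronglyMeasurable
  · rw [ENNReal.one_le_ofReal]; linarith
  · exact Finset.sum_congr rfl fun i _ => hsq i

theorem sum_lintegral_enorm_mul_le (s : Finset ι) {g h : ι → α → E}
    (hg : ∀ i ∈ s, AEStronglyMeasurable (g i) μ) (hh : ∀ i ∈ s, AEStronglyMeasurable (h i) μ)
    {p q : ℝ} (hpq : p.HolderConjugate q) :
    ∑ i ∈ s, ∫⁻ x, ‖g i x‖ₑ * ‖h i x‖ₑ ∂μ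
      ≤ eLpNorm (fun x => √(∑ i ∈ s, ‖g i x‖ ^ 2)) (ENNReal.ofReal p) μ
        * eLpNorm (fun x => √(∑ i ∈ s, ‖h i x‖ ^ 2)) (ENNReal.ofReal q) μ := by
  have := hpq.ennrealOfReal
  set u := fun x => √(∑ i ∈ s, ‖g i x‖ ^ 2)
  set v := fun x => √(∑ i ∈ s, ‖h i x‖ ^ 2)
  have hcs : ∀ x, ∑ i ∈ s, ‖g i x‖ₑ * ‖h i x‖ₑ ≤ ‖u x * v x‖ₑ := fun x => by
    rw [enorm_of_nonneg (mul_nonneg (sqrt_nonneg _) (sqrt_nonneg _))]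
    simp only [← ofReal_norm, ← ENNReal.ofReal_mul (norm_nonneg _)]
    rw [← ENNReal.ofReal_sum_of_nonneg fun i _ => by positivity]
    exact ENNReal.ofReal_le_ofReal (Real.sum_mul_le_sqrt_mul_sqrt s _ _)
  calc ∑ i ∈ s, ∫⁻ x, ‖g i x‖ₑ * ‖h i x‖ₑ ∂μ
      = ∫⁻ x, ∑ i ∈ s, ‖g i x‖ₑ * ‖h i x‖ₑ ∂μ :=
        (lintegral_finsetSum' s fun i hi => (hg i hi).enorm.mul (hh i hi).enorm).symm
    _ ≤ eLpNorm (u • v) 1 μ := by rw [eLpNorm_one_eq_lintegral_enorm]; exact lintegral_mono hcs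
    _ ≤ eLpNorm u (ENNReal.ofReal p) μ * eLpNorm v (ENNReal.ofReal q) μ :=
        eLpNorm_smul_le_mul_eLpNorm (aestronglyMeasurable_sqrt_sum_sq_norm s hh)
          (aestronglyMeasurable_sqrt_sum_sq_norm s hg)

end SquareFunction

/-- Blocks of `𝓘_a` in `[0, ∞)` together with the central one, indexed by `Option ℕ`: `none` is
`(-a₀, a₀)` and `some j` is `[a_j, a_{j+1})`. -/
def blockLeft (a : ℕ → ℝ) (o : Option ℕ) : ℝ := o.elim (-a 0) a

def blockRight (a : ℕ → ℝ) (o : Option ℕ) : ℝ := o.elim (a 0) fun j => a (j + 1)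

theorem sum_blockRight_sub_blockLeft (a : ℕ → ℝ) (k : ℕ) :
    ∑ o ∈ (Finset.range k).insertNone, (blockRight a o - blockLeft a o) = a k + a 0 := by
  rw [Finset.sum_insertNone]
  simp only [blockLeft, blockRight, Option.elim_none, Option.elim_some,
    Finset.sum_range_sub]
  ring

theorem blockLeft_lt_blockRight {a : ℕ → ℝ} (ha0 : 0 < a 0) (ha : StrictMono a) (o : Option ℕ) :
    blockLeft a o < blockRight a o := by
  cases o with
  | none => simp only [blockLeft, blockRight, Option.elim_none]; linarith
  | some j => exact ha j.lt_succ_self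

theorem abs_le_of_mem_block {a : ℕ → ℝ} (ha0 : 0 ≤ a 0) (ha : Monotone a) {k : ℕ} {o : Option ℕ}
    (ho : o ∈ (Finset.range k).insertNone) {ξ : ℝ}
    (hξ : ξ ∈ Set.Icc (blockLeft a o) (blockRight a o)) :
    |ξ| ≤ a k := by
  cases o with
  | none =>
    simp only [blockLeft, blockRight, Option.elim_none] at hξ
    exact abs_le.mpr ⟨by linarith [hξ.1, ha k.zero_le], hξ.2.trans (ha k.zero_le)⟩
  | some j =>
    simp only [Finset.some_mem_insertNone, Finset.mem_range] at ho
    simp only [blockLeft, blockRight, Option.elim_some] at hξ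
    have hξ0 : 0 ≤ ξ := ha0.trans ((ha j.zero_le).trans hξ.1)
    rw [abs_of_nonneg hξ0]
    exact hξ.2.trans (ha ho)

theorem sqrt_sum_sq_norm_SIf_le_sqFn {F : ℝ → ℂ} (hF : Integrable (𝓕 F)) {a : ℕ → ℝ}
    (ha : Monotone a) (k : ℕ) (x : ℝ) :
    √(∑ o ∈ (Finset.range k).insertNone, ‖SIf F (blockLeft a o) (blockRight a o) x‖ ^ 2)
      ≤ sqFn a F x := by
  refine sqrt_le_sqrt ?_
  rw [Finset.sum_insertNone]
  simp only [blockLeft, blockRight, Option.elim_none, Option.elim_some]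
  gcongr
  refine (Finset.sum_le_sum fun j _ =>
    le_add_of_nonneg_right (sq_nonneg ‖SIf F (-a (j + 1)) (-a j) x‖)).trans ?_
  exact (summable_sq_norm_SIf hF ha x).sum_le_tsum _ fun j _ => by positivity

theorem sum_eLpNorm_intervalBump_block_sq_le {a : ℕ → ℝ} (ha0 : 0 < a 0) (ha : StrictMono a)
    {p : ℝ} (hp : 1 ≤ p) (k : ℕ) :
    ∑ o ∈ (Finset.range k).insertNone,
        eLpNorm (intervalBump (blockLeft a o) (blockRight a o)) (ENNReal.ofReal p) ^ 2
      ≤ ENNReal.ofReal (a 0 ^ (2 * (1 - p⁻¹))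
          + ∑ j ∈ Finset.range k, (a (j + 1) - a j) ^ (2 * (1 - p⁻¹))) := by
  have hβ : 0 ≤ 2 * (1 - p⁻¹) := by
    have := inv_le_one_of_one_le₀ hp; linarith
  have hterm (o : Option ℕ) :
      eLpNorm (intervalBump (blockLeft a o) (blockRight a o)) (ENNReal.ofReal p) ^ 2
        ≤ ENNReal.ofReal (((blockRight a o - blockLeft a o) / 2) ^ (2 * (1 - p⁻¹))) := by
    have hw : 0 < (blockRight a o - blockLeft a o) / 2 := by
      linarith [blockLeft_lt_blockRight ha0 ha o]
    calc _ ≤ ENNReal.ofReal (((blockRight a o - blockLeft a o) / 2) ^ (1 - p⁻¹)) ^ 2 := by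
          gcongr; exact eLpNorm_gaussBump_le _ hw hp
      _ = _ := by
          rw [← ENNReal.ofReal_pow (by positivity), ← Real.rpow_natCast, ← Real.rpow_mul hw.le]
          ring_nf
  refine (Finset.sum_le_sum fun o _ => hterm o).trans ?_
  rw [← ENNReal.ofReal_sum_of_nonneg fun o _ =>
    Real.rpow_nonneg (by linarith [blockLeft_lt_blockRight ha0 ha o]) _, Finset.sum_insertNone]
  refine ENNReal.ofReal_le_ofReal (add_le_add (le_of_eq ?_) (Finset.sum_le_sum fun j _ => ?_))
  · simp only [blockLeft, blockRight, Option.elim_none]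
    ring_nf
  · simp only [blockLeft, blockRight, Option.elim_some]
    have hgap : 0 ≤ a (j + 1) - a j := by linarith [ha j.lt_succ_self]
    exact Real.rpow_le_rpow (by positivity) (by linarith) hβ

theorem eLpNorm_sqrt_sum_sq_norm_intervalBump_block_le {a : ℕ → ℝ} (ha0 : 0 < a 0)
    (ha : StrictMono a) {p : ℝ} (hp : 2 ≤ p) (k : ℕ) :
    eLpNorm (fun x => √(∑ o ∈ (Finset.range k).insertNone,
        ‖intervalBump (blockLeft a o) (blockRight a o) x‖ ^ 2)) (ENNReal.ofReal p)
      ≤ ENNReal.ofReal √(a 0 ^ (2 * (1 - p⁻¹))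
          + ∑ j ∈ Finset.range k, (a (j + 1) - a j) ^ (2 * (1 - p⁻¹))) := by
  have hT : 0 ≤ a 0 ^ (2 * (1 - p⁻¹)) + ∑ j ∈ Finset.range k, (a (j + 1) - a j) ^ (2 * (1 - p⁻¹)) :=
    add_nonneg (Real.rpow_nonneg ha0.le _)
      (Finset.sum_nonneg fun j _ => Real.rpow_nonneg (sub_nonneg.2 (ha.monotone j.le_succ)) _)
  refine (eLpNorm_sqrt_sum_sq_norm_le _
    (fun o _ => (continuous_gaussBump _ _).aestronglyMeasurable) hp).trans ?_
  rw [sqrt_eq_rpow, ← ENNReal.ofReal_rpow_of_nonneg hT (by norm_num), one_div]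
  exact ENNReal.rpow_le_rpow (sum_eLpNorm_intervalBump_block_sq_le ha0 ha (by linarith) k)
    (by norm_num)

theorem ofReal_le_lintegral_intervalBump_mul_SIf_gaussBump {a : ℕ → ℝ} (ha0 : 0 < a 0)
    (ha : StrictMono a) {k : ℕ} {o : Option ℕ} (ho : o ∈ (Finset.range k).insertNone) :
    ENNReal.ofReal (rexp (-(2 * π)) * (blockRight a o - blockLeft a o))
      ≤ ∫⁻ x, ‖intervalBump (blockLeft a o) (blockRight a o) x‖ₑ
          * ‖SIf (gaussBump 0 (a k)) (blockLeft a o) (blockRight a o) x‖ₑ := by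
  have hA : 0 < a k := ha0.trans_le (ha.monotone k.zero_le)
  have hF : ∀ ξ ∈ Set.Icc (blockLeft a o) (blockRight a o),
      rexp (-π) ≤ (𝓕 (gaussBump 0 (a k)) ξ).re := fun ξ hξ => by
    have hξ' := abs_le_of_mem_block ha0.le ha.monotone ho hξ
    have hsq : ((ξ - 0) / a k) ^ 2 ≤ 1 := by
      rw [sub_zero, div_pow, div_le_one (by positivity), ← sq_abs]
      exact pow_le_pow_left₀ (abs_nonneg ξ) hξ' 2
    rw [fourier_gaussBump 0 hA, ofReal_re]
    exact exp_le_exp.mpr (by nlinarith [pi_pos])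
  rw [show -(2 * π) = -π + -π by ring, Real.exp_add]
  refine (ENNReal.ofReal_le_ofReal (le_norm_integral_intervalBump_mul_SIf
    (continuous_fourier_gaussBump 0 hA) (blockLeft_lt_blockRight ha0 ha o) (exp_pos _).le
    hF)).trans ?_
  rw [ofReal_norm]
  exact (enorm_integral_le_lintegral_enorm _).trans_eq (by simp_rw [enorm_mul])

theorem exp_neg_two_pi_mul_le_of_eLpNorm_sqFn_le {a : ℕ → ℝ} (ha0 : 0 < a 0) (ha : StrictMono a)
    {p q K : ℝ} (hpq : p.HolderConjugate q) (hp : 2 ≤ p) (hK : 0 ≤ K) (k : ℕ)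
    (hbdd : eLpNorm (sqFn a (gaussBump 0 (a k))) (ENNReal.ofReal q)
      ≤ ENNReal.ofReal K * eLpNorm (gaussBump 0 (a k)) (ENNReal.ofReal q)) :
    rexp (-(2 * π)) * a k ≤ K * √(a 0 ^ (2 * (1 - p⁻¹))
      + ∑ j ∈ Finset.range k, (a (j + 1) - a j) ^ (2 * (1 - p⁻¹))) * a k ^ p⁻¹ := by
  set s := (Finset.range k).insertNone
  set T := a 0 ^ (2 * (1 - p⁻¹)) + ∑ j ∈ Finset.range k, (a (j + 1) - a j) ^ (2 * (1 - p⁻¹))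
  have hA : 0 < a k := ha0.trans_le (ha.monotone k.zero_le)
  have hbump (o : Option ℕ) :
      AEStronglyMeasurable (intervalBump (blockLeft a o) (blockRight a o)) :=
    (continuous_gaussBump _ _).aestronglyMeasurable
  have hSIf (o : Option ℕ) :
      AEStronglyMeasurable (SIf (gaussBump 0 (a k)) (blockLeft a o) (blockRight a o)) :=
    (continuous_SIf (continuous_fourier_gaussBump 0 hA) _ _).aestronglyMeasurable
  have hU := eLpNorm_sqrt_sum_sq_norm_intervalBump_block_le ha0 ha hp k
  have hV : eLpNorm
      (fun x => √(∑ o ∈ s, ‖SIf (gaussBump 0 (a k)) (blockLeft a o) (blockRight a o) x‖ ^ 2))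
      (ENNReal.ofReal q) ≤ ENNReal.ofReal K * ENNReal.ofReal (a k ^ p⁻¹) := by
    refine (eLpNorm_mono_real fun x => ?_).trans (hbdd.trans ?_)
    · rw [Real.norm_of_nonneg (sqrt_nonneg _)]
      exact sqrt_sum_sq_norm_SIf_le_sqFn (integrable_fourier_gaussBump 0 hA) ha.monotone k x
    · rw [← hpq.symm.one_sub_inv]
      gcongr
      exact eLpNorm_gaussBump_le 0 hA hpq.symm.lt.le
  have hmain : ENNReal.ofReal (rexp (-(2 * π)) * a k)
      ≤ ENNReal.ofReal (K * √T * a k ^ p⁻¹) := calc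
    _ ≤ ∑ o ∈ s, ENNReal.ofReal (rexp (-(2 * π)) * (blockRight a o - blockLeft a o)) := by
      rw [← ENNReal.ofReal_sum_of_nonneg fun o _ => by
          have := blockLeft_lt_blockRight ha0 ha o; positivity,
        ← Finset.mul_sum, sum_blockRight_sub_blockLeft]
      exact ENNReal.ofReal_le_ofReal (by gcongr; linarith)
    _ ≤ ∑ o ∈ s, ∫⁻ x, ‖intervalBump (blockLeft a o) (blockRight a o) x‖ₑ
          * ‖SIf (gaussBump 0 (a k)) (blockLeft a o) (blockRight a o) x‖ₑ :=
      Finset.sum_le_sum fun o ho => ofReal_le_lintegral_intervalBump_mul_SIf_gaussBump ha0 ha ho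
    _ ≤ _ := sum_lintegral_enorm_mul_le s (fun o _ => hbump o) (fun o _ => hSIf o) hpq
    _ ≤ ENNReal.ofReal √T * (ENNReal.ofReal K * ENNReal.ofReal (a k ^ p⁻¹)) := mul_le_mul' hU hV
    _ = _ := by
      rw [← ENNReal.ofReal_mul hK, ← ENNReal.ofReal_mul (sqrt_nonneg _)]
      ring_nf
  exact (ENNReal.ofReal_le_ofReal_iff (by positivity)).mp hmain

theorem rpow_le_sq_mul_of_mul_le_mul_sqrt_mul_rpow {A c K T p : ℝ} (hA : 0 < A) (hc : 0 < c)
    (h : c * A ≤ K * √T * A ^ p⁻¹) : A ^ (2 * (1 - p⁻¹)) ≤ (K / c) ^ 2 * T := by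
  have hT : 0 ≤ T := by
    by_contra! hT
    rw [sqrt_eq_zero_of_nonpos hT.le, mul_zero, zero_mul] at h
    exact (mul_pos hc hA).not_ge h
  have h1 : A ^ (1 - p⁻¹) ≤ K / c * √T := by
    rw [Real.rpow_sub hA, Real.rpow_one, div_le_iff₀ (by positivity)]
    rw [div_mul_eq_mul_div, div_mul_eq_mul_div, le_div_iff₀ hc]
    linarith
  calc A ^ (2 * (1 - p⁻¹)) = (A ^ (1 - p⁻¹)) ^ 2 := by
        rw [mul_comm, Real.rpow_mul hA.le, Real.rpow_two]
    _ ≤ (K / c * √T) ^ 2 := pow_le_pow_left₀ (by positivity) h1 2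
    _ = (K / c) ^ 2 * T := by rw [mul_pow, sq_sqrt hT]

end

theorem squareFunction_necessary_condition (a : ℕ → ℝ) (ha0 : 0 < a 0)
    (hmono : StrictMono a)
    (p : ℝ) (hp : 2 < p) (C : ℝ)
    (hbdd : ∀ f : SchwartzMap ℝ ℂ,
      eLpNorm (sqFn a ⇑f) (ENNReal.ofReal (p / (p - 1))) volume ≤
        ENNReal.ofReal C * eLpNorm ⇑f (ENNReal.ofReal (p / (p - 1))) volume) :
    ∃ Cp > (0:ℝ), ∀ k : ℕ, 1 ≤ k →
      a k ^ (2 * (p - 1) / p) ≤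
        Cp * ((a 0) ^ (2 * (p - 1) / p) +
          ∑ j ∈ Finset.range k, (a (j + 1) - a j) ^ (2 * (p - 1) / p)) := by
  have hpq : p.HolderConjugate (p / (p - 1)) :=
    (Real.holderConjugate_iff_eq_conjExponent (by linarith)).mpr rfl
  have hexp : 2 * (p - 1) / p = 2 * (1 - p⁻¹) := by field_simp
  refine ⟨(max C 1 / rexp (-(2 * π))) ^ 2, by positivity, fun k _ => ?_⟩
  have hA : 0 < a k := ha0.trans_le (hmono.monotone k.zero_le)
  obtain ⟨f, hf⟩ := exists_schwartzMap_eq_gaussBump hA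
  have hK : eLpNorm (sqFn a (gaussBump 0 (a k))) (ENNReal.ofReal (p / (p - 1)))
      ≤ ENNReal.ofReal (max C 1) * eLpNorm (gaussBump 0 (a k)) (ENNReal.ofReal (p / (p - 1))) := by
    rw [← hf]
    exact (hbdd f).trans (by gcongr; exact le_max_left C 1)
  rw [hexp]
  exact rpow_le_sq_mul_of_mul_le_mul_sqrt_mul_rpow hA (by positivity)
    (exp_neg_two_pi_mul_le_of_eLpNorm_sqFn_le ha0 hmono hpq hp.le (by positivity) k hK)
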